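/- arXiv:1109.3544 — 2 statements merged into one kernel-verified Lean document; each statement's English description precedes it below -/
import Mathlib

section
/- Let S be the solution produced by algorithm ALG* for the modified Bin Covering problem on an instance (I,J). Then there exists a solution S* of the modified Bin Covering problem that contains no split items, is maximal with respect to the modified Bin Covering problem, and satisfies p*(S) ≤ 2·p*(S*). -/
open scoped Classical

noncomputable section

namespace BinCov

/-- Profit of a solution `S` on the bin set `B`: a bin `i ∈ B` earns profit `p i`
if the total size of the items assigned to it is at least its demand `d i`. -/
def profit (d p s : ℕ → ℝ) (B : Finset ℕ) (S : ℕ → Finset ℕ) : ℝ :=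
  ∑ i ∈ B, if d i ≤ ∑ j ∈ S i, s j then p i else 0

/-- A solution assigns pairwise disjoint subsets of the item set `T` to the bins. -/
def IsSolution (T : Finset ℕ) (S : ℕ → Finset ℕ) : Prop :=
  (∀ i, S i ⊆ T) ∧ Pairwise fun i i' => Disjoint (S i) (S i')

/-- Optimal profit over all solutions on bins `B` and items `T`. -/
def OPT (d p s : ℕ → ℝ) (B T : Finset ℕ) : ℝ :=
  sSup (profit d p s B '' {S | IsSolution T S})

/-- Take a minimal prefix of `items` whose total size reaches `dem`;
returns this prefix together with the remaining items. -/
def takeFill (s : ℕ → ℝ) : ℝ → List ℕ → List ℕ × List ℕ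
  | _, [] => ([], [])
  | dem, j :: rest =>
    if dem ≤ s j then ([j], rest)
    else
      let q := takeFill s (dem - s j) rest
      (j :: q.1, q.2)

/-- Next Fit Decreasing on the list `bins` of bins and the list `items` of still
unassigned items (both by index, i.e. in non-increasing order of demand resp. size):
if the unassigned items cannot cover the current bin, it is left empty; otherwise a
minimal prefix of the unassigned items is assigned to it.  Returns, for each bin,
the set of items assigned to it. -/
def nfdAux (d s : ℕ → ℝ) : List ℕ → List ℕ → ℕ → Finset ℕ
  | [], _, _ => ∅
  | i :: bins, items, b =>
    if d i ≤ (items.map s).sum then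
      let q := takeFill s (d i) items
      if b = i then q.1.toFinset else nfdAux d s bins q.2 b
    else
      if b = i then ∅ else nfdAux d s bins items b

/-- The solution produced by NFD on bin set `B` and item set `T` (bins and items are
processed in increasing order of index; demands and sizes are non-increasing in the index). -/
def nfdSol (d s : ℕ → ℝ) (B T : Finset ℕ) : ℕ → Finset ℕ :=
  nfdAux d s (B.sort (· ≤ ·)) (T.sort (· ≤ ·))

/-- The total size `u i` that NFD assigns to bin `i`. -/
def nfdU (d s : ℕ → ℝ) (B T : Finset ℕ) (i : ℕ) : ℝ :=
  ∑ j ∈ nfdSol d s B T i, s j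

/-- The profit NFD earns (Variable-Sized Bin Covering: the profit of a bin is its demand). -/
def NFD (d s : ℕ → ℝ) (B T : Finset ℕ) : ℝ :=
  profit d d s B (nfdSol d s B T)

/-- A bin `istar` with `u istar > 0` in NFD's solution (bins `0,…,m-1`, items `T`) is
well-covered if for the smallest index `i' > istar` with `u i' = 0` (which must exist)
one has `u i ≤ 2 * d i` for all bins `i ≤ i'`. -/
def WellCovered (d s : ℕ → ℝ) (m : ℕ) (T : Finset ℕ) (istar : ℕ) : Prop :=
  istar < m ∧ 0 < nfdU d s (Finset.range m) T istar ∧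
    ∃ i', istar < i' ∧ i' < m ∧ nfdU d s (Finset.range m) T i' = 0 ∧
      (∀ i, istar < i → i < i' → nfdU d s (Finset.range m) T i ≠ 0) ∧
      ∀ i ≤ i', nfdU d s (Finset.range m) T i ≤ 2 * d i

/-- `istar` is the head of the instance: letting `i0` be the smallest index of a non-empty
bin of NFD's solution that is not well-covered, and `i1 ≥ i0` the smallest index with
`u (i1+1) = 0`, the head is the largest index `istar ≤ i1` with `u istar > 2 * d istar`. -/
def IsHead (d s : ℕ → ℝ) (m : ℕ) (T : Finset ℕ) (istar : ℕ) : Prop :=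
  ∃ i0 i1,
    i0 < m ∧ 0 < nfdU d s (Finset.range m) T i0 ∧ ¬ WellCovered d s m T i0 ∧
    (∀ i < i0, 0 < nfdU d s (Finset.range m) T i → WellCovered d s m T i) ∧
    i0 ≤ i1 ∧ nfdU d s (Finset.range m) T (i1 + 1) = 0 ∧
    (∀ i, i0 ≤ i → i < i1 → nfdU d s (Finset.range m) T (i + 1) ≠ 0) ∧
    istar ≤ i1 ∧ 2 * d istar < nfdU d s (Finset.range m) T istar ∧
    (∀ i ≤ i1, 2 * d i < nfdU d s (Finset.range m) T i → i ≤ istar)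

/-- The inner loop of `ALG*` on one bin: `dcap` is the bin's demand (items are admissible iff
their size is at most `dcap`), `space` is the part of the demand not yet covered, and `rem j`
is the still unassigned part of item `j` (items `0,…,n-1`, sizes non-increasing in the index).
While the bin is not covered and some admissible item is not fully assigned, the largest such
item (i.e. the one of smallest index) is taken and its remaining part is assigned to the bin,
splitting it so that the bin is exactly covered if it would overflow.
Returns the updated remainders together with the total amount assigned to the bin. -/
def fillBin (s : ℕ → ℝ) (n : ℕ) (dcap : ℝ) : ℕ → ℝ → (ℕ → ℝ) → (ℕ → ℝ) × ℝ
  | 0, _, rem => (rem, 0)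
  | fuel + 1, space, rem =>
    if h : ∃ j, j < n ∧ s j ≤ dcap ∧ 0 < rem j then
      let j := Nat.find h
      if rem j ≤ space then
        let q := fillBin s n dcap fuel (space - rem j) (Function.update rem j 0)
        (q.1, q.2 + rem j)
      else
        (Function.update rem j (rem j - space), space)
    else (rem, 0)

/-- The outer loop of `ALG*`: the bins are processed in the given order (non-increasing
efficiency); returns the total amount assigned to each bin. -/
def algStarFillAux (d s : ℕ → ℝ) (n : ℕ) : List ℕ → (ℕ → ℝ) → ℕ → ℝ
  | [], _, _ => 0
  | i :: bins, rem, b =>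
    let q := fillBin s n (d i) n (d i) rem
    if b = i then q.2 else algStarFillAux d s n bins q.1 b

/-- The total amount `ALG*` assigns to each bin, on the instance with bins `0,…,m-1`
(in non-increasing order of efficiency) and items `0,…,n-1` (in non-increasing order of size). -/
def algStarFill (m n : ℕ) (d s : ℕ → ℝ) : ℕ → ℝ :=
  algStarFillAux d s n (List.range m) fun j => if j < n then s j else 0

/-- The modified profit `p*` of the solution produced by `ALG*`. -/
def algStarPStar (m n : ℕ) (d p s : ℕ → ℝ) : ℝ :=
  ∑ i ∈ Finset.range m, p i * min (algStarFill m n d s i / d i) 1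

/-- The optimum of the linear program for the modified Bin Covering problem. -/
def LPOpt (m n : ℕ) (d p s : ℕ → ℝ) : ℝ :=
  sSup {v : ℝ | ∃ y : ℕ → ℝ, ∃ x : ℕ → ℕ → ℝ,
    (∀ i < m, y i ≤ (∑ j ∈ Finset.range n, x j i) / d i) ∧
    (∀ j < n, ∑ i ∈ Finset.range m, x j i ≤ s j) ∧
    (∀ i, 0 ≤ y i ∧ y i ≤ 1) ∧
    (∀ j i, 0 ≤ x j i) ∧
    (∀ j < n, ∀ i < m, d i < s j → x j i = 0) ∧
    v = ∑ i ∈ Finset.range m, p i * y i}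

/-- A solution of the modified Bin Covering problem, assigning item parts from the
finite set `P` (part `q ∈ P` belongs to item `itm q`) to the bins `0,…,m-1`;
a part may only be assigned to a bin to which its item is admissible. -/
def IsPartSolution (m : ℕ) (d s : ℕ → ℝ) (itm : ℕ → ℕ) (P : Finset ℕ) (S : ℕ → Finset ℕ) : Prop :=
  (∀ i, S i ⊆ P) ∧ (Pairwise fun i i' => Disjoint (S i) (S i')) ∧
  (∀ i < m, ∀ q ∈ S i, s (itm q) ≤ d i) ∧ (∀ i, m ≤ i → S i = ∅)

/-- The modified profit `p*` of a solution, where `psz q` is the size of part `q`. -/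
def pStarParts (m : ℕ) (d p psz : ℕ → ℝ) (S : ℕ → Finset ℕ) : ℝ :=
  ∑ i ∈ Finset.range m, p i * min ((∑ q ∈ S i, psz q) / d i) 1

/-- A solution of the modified Bin Covering problem is maximal if there are no two distinct
bins `i`, `i'` with `0 < s(S_i) < d_i`, `0 < s(S_i') < d_i'` and `e_i ≤ e_i'` such that
some item of `S_i` is admissible to bin `i'`. -/
def MaximalMod (m : ℕ) (d p s : ℕ → ℝ) (S : ℕ → Finset ℕ) : Prop :=
  ¬ ∃ i i', i < m ∧ i' < m ∧ i ≠ i' ∧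
      (0 < ∑ j ∈ S i, s j) ∧ (∑ j ∈ S i, s j) < d i ∧
      (0 < ∑ j ∈ S i', s j) ∧ (∑ j ∈ S i', s j) < d i' ∧
      p i / d i ≤ p i' / d i' ∧ ∃ j ∈ S i, s j ≤ d i'

/-- A solution induced by a matching in the bipartite graph on bins and items with an
edge `ij` whenever `s j > d i`: every bin receives at most one item, and any item
assigned to a bin covers it singularly. -/
def IsMatchingSol (m n : ℕ) (d s : ℕ → ℝ) (S : ℕ → Finset ℕ) : Prop :=
  IsSolution (Finset.range n) S ∧ (∀ i, (S i).card ≤ 1) ∧ ∀ i < m, ∀ j ∈ S i, d i < s j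

end BinCov

namespace BinCov


/-! ### Auxiliary development -/

section FillBin

variable (d p s : ℕ → ℝ) (m n : ℕ)

lemma fillBin_zero (dcap space : ℝ) (rem : ℕ → ℝ) :
    fillBin s n dcap 0 space rem = (rem, 0) := by
  rw [fillBin]

lemma fillBin_succ_neg (dcap space : ℝ) (rem : ℕ → ℝ) (fuel : ℕ)
    (h : ¬ ∃ j, j < n ∧ s j ≤ dcap ∧ 0 < rem j) :
    fillBin s n dcap (fuel + 1) space rem = (rem, 0) := by
  rw [fillBin, dif_neg h]

lemma fillBin_succ_pos_le (dcap space : ℝ) (rem : ℕ → ℝ) (fuel : ℕ)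
    (h : ∃ j, j < n ∧ s j ≤ dcap ∧ 0 < rem j)
    (hle : rem (Nat.find h) ≤ space) :
    fillBin s n dcap (fuel + 1) space rem =
      ((fillBin s n dcap fuel (space - rem (Nat.find h))
          (Function.update rem (Nat.find h) 0)).1,
       (fillBin s n dcap fuel (space - rem (Nat.find h))
          (Function.update rem (Nat.find h) 0)).2 + rem (Nat.find h)) := by
  rw [fillBin, dif_pos h]
  simp only [hle, if_pos]

lemma fillBin_succ_pos_gt (dcap space : ℝ) (rem : ℕ → ℝ) (fuel : ℕ)
    (h : ∃ j, j < n ∧ s j ≤ dcap ∧ 0 < rem j)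
    (hle : ¬ rem (Nat.find h) ≤ space) :
    fillBin s n dcap (fuel + 1) space rem =
      (Function.update rem (Nat.find h) (rem (Nat.find h) - space), space) := by
  rw [fillBin, dif_pos h]
  simp only [hle, if_neg, if_false]

/-- Main specification of `fillBin`. -/
lemma fillBin_spec (dcap : ℝ) :
    ∀ (fuel : ℕ) (space : ℝ) (rem : ℕ → ℝ), (∀ j, 0 ≤ rem j) → 0 ≤ space →
      (∀ j, 0 ≤ (fillBin s n dcap fuel space rem).1 j) ∧
      (∀ j, (fillBin s n dcap fuel space rem).1 j ≤ rem j) ∧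
      (∀ j, (fillBin s n dcap fuel space rem).1 j ≠ rem j → j < n ∧ s j ≤ dcap) ∧
      ((fillBin s n dcap fuel space rem).2
        = ∑ j ∈ Finset.range n, (rem j - (fillBin s n dcap fuel space rem).1 j)) ∧
      ((fillBin s n dcap fuel space rem).2 ≤ space) ∧
      (∀ j k, 0 < (fillBin s n dcap fuel space rem).1 j →
        (fillBin s n dcap fuel space rem).1 j < rem j →
        0 < (fillBin s n dcap fuel space rem).1 k →
        (fillBin s n dcap fuel space rem).1 k < rem k → j = k) := by
  intro fuel
  induction fuel with
  | zero =>
    intro space rem hrem hsp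
    rw [fillBin_zero]
    refine ⟨hrem, fun j => le_refl _, fun j hj => absurd rfl hj, ?_, hsp, ?_⟩
    · simp
    · intro j k _ hj _ _
      exact absurd hj (lt_irrefl _)
  | succ fuel ih =>
    intro space rem hrem hsp
    by_cases h : ∃ j, j < n ∧ s j ≤ dcap ∧ 0 < rem j
    · set j0 := Nat.find h with hj0def
      obtain ⟨hj0n, hj0s, hj0pos⟩ := Nat.find_spec h
      by_cases hle : rem j0 ≤ space
      · rw [fillBin_succ_pos_le s n dcap space rem fuel h hle]
        set rem1 := Function.update rem j0 0 with hrem1def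
        have hrem1 : ∀ j, 0 ≤ rem1 j := by
          intro j
          rcases eq_or_ne j j0 with rfl | hne
          · simp [hrem1def]
          · simp [hrem1def, Function.update_of_ne hne]; exact hrem j
        have hsp1 : (0:ℝ) ≤ space - rem j0 := by linarith
        obtain ⟨i1, i2, i3, i4, i5, i6⟩ := ih (space - rem j0) rem1 hrem1 hsp1
        set res := fillBin s n dcap fuel (space - rem j0) rem1 with hres
        have hrem1le : ∀ j, rem1 j ≤ rem j := by
          intro j
          rcases eq_or_ne j j0 with rfl | hne
          · simp [hrem1def]; exact hrem _
          · simp [hrem1def, Function.update_of_ne hne]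
        refine ⟨i1, fun j => le_trans (i2 j) (hrem1le j), ?_, ?_, ?_, ?_⟩
        · intro j hj
          rcases eq_or_ne j j0 with rfl | hne
          · exact ⟨hj0n, hj0s⟩
          · refine i3 j ?_
            simpa [hrem1def, Function.update_of_ne hne] using hj
        · -- conservation
          have e1 : ∑ j ∈ Finset.range n, (rem j - rem1 j) = rem j0 := by
            rw [Finset.sum_eq_single j0]
            · simp [hrem1def]
            · intro b _ hb
              simp [hrem1def, Function.update_of_ne hb]
            · intro hb
              exact absurd (Finset.mem_range.mpr hj0n) hb
          have : ∑ j ∈ Finset.range n, (rem j - res.1 j)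
              = ∑ j ∈ Finset.range n, (rem j - rem1 j)
                + ∑ j ∈ Finset.range n, (rem1 j - res.1 j) := by
            rw [← Finset.sum_add_distrib]
            apply Finset.sum_congr rfl
            intro j _; ring
          rw [this, e1, i4]
          ring
        · -- bound
          have := i5
          simp only []
          linarith
        · -- at most one partial
          intro j k hjpos hjlt hkpos hklt
          have hj' : res.1 j < rem1 j := by
            rcases eq_or_ne j j0 with rfl | hne
            · exfalso
              have h2 := i2 j0
              have h0 : rem1 j0 = 0 := by simp [hrem1def]
              rw [h0] at h2
              linarith
            · have : rem1 j = rem j := by simp [hrem1def, Function.update_of_ne hne]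
              rw [this]; exact hjlt
          have hk' : res.1 k < rem1 k := by
            rcases eq_or_ne k j0 with rfl | hne
            · exfalso
              have h2 := i2 j0
              have h0 : rem1 j0 = 0 := by simp [hrem1def]
              rw [h0] at h2
              linarith
            · have : rem1 k = rem k := by simp [hrem1def, Function.update_of_ne hne]
              rw [this]; exact hklt
          exact i6 j k hjpos hj' hkpos hk'
      · rw [fillBin_succ_pos_gt s n dcap space rem fuel h hle]
        dsimp only
        simp only [← hj0def]
        push_neg at hle
        have hupd : ∀ j, (Function.update rem j0 (rem j0 - space)) j
            = if j = j0 then rem j0 - space else rem j := by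
          intro j
          rcases eq_or_ne j j0 with rfl | hne
          · simp
          · simp [Function.update_of_ne hne, hne]
        refine ⟨?_, ?_, ?_, ?_, le_refl _, ?_⟩
        · intro j; rw [hupd]
          split
          · linarith
          · exact hrem j
        · intro j; rw [hupd]
          split
          · rename_i hj; subst hj; linarith
          · exact le_refl _
        · intro j hj
          rw [hupd] at hj
          by_cases hjj : j = j0
          · subst hjj; exact ⟨hj0n, hj0s⟩
          · simp [hjj] at hj
        · rw [Finset.sum_eq_single j0]
          · rw [hupd]; simp
          · intro b _ hb; rw [hupd]; simp [hb]
          · intro hb; exact absurd (Finset.mem_range.mpr hj0n) hb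
        · intro j k hjpos hjlt hkpos hklt
          rw [hupd] at hjpos hjlt
          rw [hupd] at hkpos hklt
          by_cases hjj : j = j0
          · by_cases hkk : k = j0
            · rw [hjj, hkk]
            · simp [hkk] at hklt
          · simp [hjj] at hjlt
    · rw [fillBin_succ_neg s n dcap space rem fuel h]
      refine ⟨hrem, fun j => le_refl _, fun j hj => absurd rfl hj, by simp, hsp, ?_⟩
      intro j k _ hj _ _
      exact absurd hj (lt_irrefl _)

end FillBin


section Chain

variable (d s : ℕ → ℝ) (n : ℕ)

/-- The remainder function after processing bins `0, …, i-1`. -/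
noncomputable def RemC : ℕ → ℕ → ℝ
  | 0 => fun j => if j < n then s j else 0
  | i + 1 => (fillBin s n (d i) n (d i) (RemC i)).1

/-- The fill of bin `i`. -/
noncomputable def FillC (i : ℕ) : ℝ := (fillBin s n (d i) n (d i) (RemC d s n i)).2

lemma algStarFillAux_append (l₁ l₂ : List ℕ) (r : ℕ → ℝ) (b : ℕ) :
    algStarFillAux d s n (l₁ ++ l₂) r b =
      if b ∈ l₁ then algStarFillAux d s n l₁ r b
      else algStarFillAux d s n l₂
        (l₁.foldl (fun r i => (fillBin s n (d i) n (d i) r).1) r) b := by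
  induction l₁ generalizing r with
  | nil => simp [List.foldl]
  | cons i l ih =>
    by_cases hb : b = i
    · subst hb
      simp [algStarFillAux]
    · rw [show ((i :: l) ++ l₂) = i :: (l ++ l₂) from rfl]
      rw [show algStarFillAux d s n (i :: (l ++ l₂)) r b
            = algStarFillAux d s n (l ++ l₂) (fillBin s n (d i) n (d i) r).1 b by
          simp [algStarFillAux, hb]]
      rw [ih]
      by_cases hbl : b ∈ l
      · simp [algStarFillAux, hbl, hb]
      · simp [algStarFillAux, hbl, hb, List.foldl_cons]

lemma RemC_eq_foldl (i : ℕ) :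
    RemC d s n i = (List.range i).foldl (fun r i => (fillBin s n (d i) n (d i) r).1)
      (fun j => if j < n then s j else 0) := by
  induction i with
  | zero => simp [RemC]
  | succ i ih =>
    rw [List.range_succ, List.foldl_append, ← ih]
    simp [RemC]

lemma algStarFill_eq_FillC (m : ℕ) (b : ℕ) (hb : b < m) :
    algStarFill m n d s b = FillC d s n b := by
  induction m with
  | zero => omega
  | succ m ih =>
    unfold algStarFill
    rw [List.range_succ, algStarFillAux_append]
    by_cases hbm : b < m
    · rw [if_pos (List.mem_range.mpr hbm)]
      exact ih hbm
    · have hbm' : b = m := by omega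
      rw [if_neg (by simp [List.mem_range]; omega)]
      subst hbm'
      rw [← RemC_eq_foldl]
      simp only [algStarFillAux, if_pos rfl]
      rfl

lemma RemC_nonneg (m : ℕ) (hd : ∀ i < m, 0 < d i) (hs : ∀ j < n, 0 < s j)
    (i : ℕ) (hi : i ≤ m) (j : ℕ) : 0 ≤ RemC d s n i j := by
  induction i generalizing j with
  | zero =>
    simp only [RemC]
    split
    · exact le_of_lt (hs j (by assumption))
    · exact le_refl _
  | succ i ih =>
    have hi' : i ≤ m := by omega
    have hdi : 0 < d i := hd i (by omega)
    simp only [RemC]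
    exact (fillBin_spec s n (d i) n (d i) (RemC d s n i) (fun j => ih hi' j)
      (le_of_lt hdi)).1 j

lemma RemC_succ_le (m : ℕ) (hd : ∀ i < m, 0 < d i) (hs : ∀ j < n, 0 < s j)
    (i : ℕ) (hi : i < m) (j : ℕ) : RemC d s n (i + 1) j ≤ RemC d s n i j := by
  have hdi : 0 < d i := hd i hi
  exact (fillBin_spec s n (d i) n (d i) (RemC d s n i)
    (fun j => RemC_nonneg d s n m hd hs i (le_of_lt hi) j) (le_of_lt hdi)).2.1 j

lemma RemC_antitone (m : ℕ) (hd : ∀ i < m, 0 < d i) (hs : ∀ j < n, 0 < s j)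
    (i i' : ℕ) (hii' : i ≤ i') (hi' : i' ≤ m) (j : ℕ) :
    RemC d s n i' j ≤ RemC d s n i j := by
  induction i' with
  | zero =>
    have : i = 0 := by omega
    subst this; exact le_refl _
  | succ i' ih =>
    rcases Nat.eq_or_lt_of_le hii' with rfl | hlt
    · exact le_refl _
    · exact le_trans (RemC_succ_le d s n m hd hs i' (by omega) j)
        (ih (by omega) (by omega))

lemma RemC_zero_eq (j : ℕ) (hj : j < n) : RemC d s n 0 j = s j := by
  simp [RemC, hj]

end Chain


section Charge

variable (d p s : ℕ → ℝ) (m n : ℕ)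

/-- Items first touched while processing bin `i`. -/
noncomputable def BSet (i : ℕ) : Finset ℕ :=
  (Finset.range n).filter (fun j => RemC d s n (i+1) j < s j ∧ RemC d s n i j = s j)

def fSum (S : ℕ → Finset ℕ) (i : ℕ) : ℝ := ∑ j ∈ S i, s j

noncomputable def Psi (S : ℕ → Finset ℕ) : ℝ :=
  ∑ i ∈ Finset.range m, p i *
    (min (fSum s S i / d i) 1 + if d i ≤ fSum s S i then 1 else 0)

variable (hd : ∀ i < m, 0 < d i) (hp : ∀ i < m, 0 < p i) (hs : ∀ j < n, 0 < s j)

include hd hs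

lemma BSet_not_mem_later (i i' : ℕ) (hii' : i < i') (hi' : i' < m) (j : ℕ)
    (hj : j ∈ BSet d s n i) : j ∉ BSet d s n i' := by
  intro hj'
  simp only [BSet, Finset.mem_filter, Finset.mem_range] at hj hj'
  have h1 : RemC d s n i' j ≤ RemC d s n (i+1) j :=
    RemC_antitone d s n m hd hs (i+1) i' hii' (le_of_lt hi') j
  have := hj.2.1
  have := hj'.2.2
  linarith

lemma BSet_disjoint (i i' : ℕ) (hne : i ≠ i') (hi : i < m) (hi' : i' < m) (j : ℕ)
    (hj : j ∈ BSet d s n i) : j ∉ BSet d s n i' := by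
  rcases lt_or_gt_of_ne hne with h | h
  · exact BSet_not_mem_later d s m n hd hs i i' h hi' j hj
  · intro hj'
    exact BSet_not_mem_later d s m n hd hs i' i h hi j hj' hj

lemma BSet_admissible (i : ℕ) (hi : i < m) (j : ℕ) (hj : j ∈ BSet d s n i) :
    j < n ∧ s j ≤ d i := by
  simp only [BSet, Finset.mem_filter, Finset.mem_range] at hj
  have hne : (fillBin s n (d i) n (d i) (RemC d s n i)).1 j ≠ RemC d s n i j := by
    show RemC d s n (i+1) j ≠ RemC d s n i j
    rw [hj.2.2]
    exact ne_of_lt hj.2.1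
  exact (fillBin_spec s n (d i) n (d i) (RemC d s n i)
    (fun j => RemC_nonneg d s n m hd hs i (le_of_lt hi) j)
    (le_of_lt (hd i hi))).2.2.1 j hne

lemma FillC_eq_sum (i : ℕ) (hi : i < m) :
    FillC d s n i = ∑ j ∈ Finset.range n, (RemC d s n i j - RemC d s n (i+1) j) :=
  (fillBin_spec s n (d i) n (d i) (RemC d s n i)
    (fun j => RemC_nonneg d s n m hd hs i (le_of_lt hi) j)
    (le_of_lt (hd i hi))).2.2.2.1

lemma FillC_le (i : ℕ) (hi : i < m) : FillC d s n i ≤ d i :=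
  (fillBin_spec s n (d i) n (d i) (RemC d s n i)
    (fun j => RemC_nonneg d s n m hd hs i (le_of_lt hi) j)
    (le_of_lt (hd i hi))).2.2.2.2.1

lemma FillC_nonneg (i : ℕ) (hi : i < m) : 0 ≤ FillC d s n i := by
  rw [FillC_eq_sum d s m n hd hs i hi]
  apply Finset.sum_nonneg
  intro j _
  have := RemC_succ_le d s n m hd hs i hi j
  linarith

lemma RemC_untouched (i : ℕ) (hi : i ≤ m) (j : ℕ) (hj : j < n)
    (h : ∀ i' < i, j ∉ BSet d s n i') : RemC d s n i j = s j := by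
  induction i with
  | zero => exact RemC_zero_eq d s n j hj
  | succ i ih =>
    have hprev : RemC d s n i j = s j := ih (by omega) (fun i' hi' => h i' (by omega))
    have hle : RemC d s n (i+1) j ≤ RemC d s n i j :=
      RemC_succ_le d s n m hd hs i (by omega) j
    rcases eq_or_lt_of_le hle with heq | hlt
    · rw [heq, hprev]
    · exfalso
      apply h i (by omega)
      simp only [BSet, Finset.mem_filter, Finset.mem_range]
      exact ⟨hj, by rw [← hprev]; exact hlt, hprev⟩

include hp in
lemma charge_per_item (heff : ∀ i i', i ≤ i' → i' < m → p i' / d i' ≤ p i / d i)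
    (j : ℕ) (hj : j < n) :
    ∑ i ∈ Finset.range m, p i / d i * (RemC d s n i j - RemC d s n (i+1) j)
      ≤ ∑ i ∈ Finset.range m, (if j ∈ BSet d s n i then p i / d i * s j else 0) := by
  by_cases hstart : ∃ i0, i0 < m ∧ j ∈ BSet d s n i0
  · obtain ⟨i0, hi0m, hi0⟩ := hstart
    have hRHS : ∑ i ∈ Finset.range m, (if j ∈ BSet d s n i then p i / d i * s j else 0)
        = p i0 / d i0 * s j := by
      rw [Finset.sum_eq_single i0]
      · rw [if_pos hi0]
      · intro b hb hbne
        rw [if_neg]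
        exact fun hbmem =>
          (BSet_disjoint d s m n hd hs b i0 hbne (Finset.mem_range.mp hb) hi0m j hbmem) hi0
      · intro h; exact absurd (Finset.mem_range.mpr hi0m) h
    rw [hRHS]
    have he0pos : 0 < p i0 / d i0 := div_pos (hp i0 hi0m) (hd i0 hi0m)
    have hpt : ∀ i ∈ Finset.range m,
        p i / d i * (RemC d s n i j - RemC d s n (i+1) j)
          ≤ p i0 / d i0 * (RemC d s n i j - RemC d s n (i+1) j) := by
      intro i hi
      rw [Finset.mem_range] at hi
      rcases lt_or_ge i i0 with hlt | hge
      · have h1 : RemC d s n i j = s j := by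
          apply RemC_untouched d s m n hd hs i (by omega) j hj
          intro i' hi'
          exact fun hmem =>
            (BSet_disjoint d s m n hd hs i' i0 (by omega) (by omega) hi0m j hmem) hi0
        have h2 : RemC d s n (i+1) j = s j := by
          apply RemC_untouched d s m n hd hs (i+1) (by omega) j hj
          intro i' hi'
          exact fun hmem =>
            (BSet_disjoint d s m n hd hs i' i0 (by omega) (by omega) hi0m j hmem) hi0
        rw [h1, h2]
        simp
      · have hle : p i / d i ≤ p i0 / d i0 := heff i0 i hge hi
        have hx : 0 ≤ RemC d s n i j - RemC d s n (i+1) j := by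
          have := RemC_succ_le d s n m hd hs i hi j; linarith
        exact mul_le_mul_of_nonneg_right hle hx
    calc ∑ i ∈ Finset.range m, p i / d i * (RemC d s n i j - RemC d s n (i+1) j)
        ≤ ∑ i ∈ Finset.range m, p i0 / d i0 * (RemC d s n i j - RemC d s n (i+1) j) :=
          Finset.sum_le_sum hpt
      _ = p i0 / d i0 * ∑ i ∈ Finset.range m, (RemC d s n i j - RemC d s n (i+1) j) := by
          rw [Finset.mul_sum]
      _ = p i0 / d i0 * (RemC d s n 0 j - RemC d s n m j) := by
          rw [Finset.sum_range_sub' (fun i => RemC d s n i j)]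
      _ ≤ p i0 / d i0 * s j := by
          have h0 : RemC d s n 0 j = s j := RemC_zero_eq d s n j hj
          have hm : 0 ≤ RemC d s n m j := RemC_nonneg d s n m hd hs m le_rfl j
          rw [h0]
          apply mul_le_mul_of_nonneg_left _ (le_of_lt he0pos)
          linarith
  · push_neg at hstart
    have hall : ∀ i ≤ m, RemC d s n i j = s j := by
      intro i hi
      exact RemC_untouched d s m n hd hs i hi j hj
        (fun i' hi' => hstart i' (by omega))
    have hL : ∑ i ∈ Finset.range m, p i / d i * (RemC d s n i j - RemC d s n (i+1) j) = 0 := by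
      apply Finset.sum_eq_zero
      intro i hi
      rw [Finset.mem_range] at hi
      rw [hall i (by omega), hall (i+1) (by omega)]
      ring
    have hR : ∑ i ∈ Finset.range m, (if j ∈ BSet d s n i then p i / d i * s j else 0) = 0 := by
      apply Finset.sum_eq_zero
      intro i hi
      rw [Finset.mem_range] at hi
      rw [if_neg (hstart i hi)]
    rw [hL, hR]

lemma BSet_sum_le (i : ℕ) (hi : i < m) :
    ∑ j ∈ BSet d s n i, s j ≤ FillC d s n i + d i := by
  have hsub : BSet d s n i ⊆ Finset.range n := Finset.filter_subset _ _
  have hmemfacts : ∀ j ∈ BSet d s n i,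
      RemC d s n (i+1) j < RemC d s n i j ∧ RemC d s n i j = s j := by
    intro j hj
    simp only [BSet, Finset.mem_filter, Finset.mem_range] at hj
    exact ⟨by rw [hj.2.2]; exact hj.2.1, hj.2.2⟩
  have hsplit : ∑ j ∈ BSet d s n i, s j
      = ∑ j ∈ BSet d s n i, (RemC d s n i j - RemC d s n (i+1) j)
        + ∑ j ∈ BSet d s n i, RemC d s n (i+1) j := by
    rw [← Finset.sum_add_distrib]
    apply Finset.sum_congr rfl
    intro j hj
    have := (hmemfacts j hj).2
    linarith
  have h1 : ∑ j ∈ BSet d s n i, (RemC d s n i j - RemC d s n (i+1) j)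
      ≤ FillC d s n i := by
    rw [FillC_eq_sum d s m n hd hs i hi]
    apply Finset.sum_le_sum_of_subset_of_nonneg hsub
    intro j _ _
    have := RemC_succ_le d s n m hd hs i hi j
    linarith
  have h2 : ∑ j ∈ BSet d s n i, RemC d s n (i+1) j ≤ d i := by
    have huniq := (fillBin_spec s n (d i) n (d i) (RemC d s n i)
      (fun j => RemC_nonneg d s n m hd hs i (le_of_lt hi) j)
      (le_of_lt (hd i hi))).2.2.2.2.2
    by_cases hex : ∃ j0 ∈ BSet d s n i, 0 < RemC d s n (i+1) j0
    · obtain ⟨j0, hj0, hpos⟩ := hex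
      have heq : ∑ j ∈ BSet d s n i, RemC d s n (i+1) j = RemC d s n (i+1) j0 := by
        apply Finset.sum_eq_single_of_mem j0 hj0
        intro b hb hbne
        by_contra hb0
        have hbnn : 0 ≤ RemC d s n (i+1) b :=
          RemC_nonneg d s n m hd hs (i+1) (by omega) b
        have hbpos : 0 < RemC d s n (i+1) b := by
          rcases eq_or_lt_of_le hbnn with h | h
          · exact absurd h.symm hb0
          · exact h
        exact hbne (huniq b j0 hbpos (hmemfacts b hb).1 hpos (hmemfacts j0 hj0).1)
      rw [heq]
      have hadm := BSet_admissible d s m n hd hs i hi j0 hj0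
      have := (hmemfacts j0 hj0).1
      have := (hmemfacts j0 hj0).2
      linarith
    · push_neg at hex
      have : ∑ j ∈ BSet d s n i, RemC d s n (i+1) j = 0 := by
        apply Finset.sum_eq_zero
        intro j hj
        have h1 := hex j hj
        have h2 : 0 ≤ RemC d s n (i+1) j :=
          RemC_nonneg d s n m hd hs (i+1) (by omega) j
        linarith
      rw [this]
      exact le_of_lt (hd i hi)
  linarith

include hp in
lemma alg_le_Psi (heff : ∀ i i', i ≤ i' → i' < m → p i' / d i' ≤ p i / d i) :
    algStarPStar m n d p s
      ≤ Psi d p s m (fun i => if i < m then BSet d s n i else ∅) := by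
  have step1 : algStarPStar m n d p s
      = ∑ i ∈ Finset.range m, p i / d i * FillC d s n i := by
    unfold algStarPStar
    apply Finset.sum_congr rfl
    intro i hi
    rw [Finset.mem_range] at hi
    rw [algStarFill_eq_FillC d s n m i hi]
    have hmin : min (FillC d s n i / d i) 1 = FillC d s n i / d i := by
      apply min_eq_left
      rw [div_le_one (hd i hi)]
      exact FillC_le d s m n hd hs i hi
    rw [hmin]
    ring
  rw [step1]
  have step3 : ∑ i ∈ Finset.range m, p i / d i * FillC d s n i
      ≤ ∑ i ∈ Finset.range m, p i / d i * ∑ j ∈ BSet d s n i, s j := by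
    have lhs_eq : ∑ i ∈ Finset.range m, p i / d i * FillC d s n i
        = ∑ j ∈ Finset.range n, ∑ i ∈ Finset.range m,
            p i / d i * (RemC d s n i j - RemC d s n (i+1) j) := by
      rw [Finset.sum_comm]
      apply Finset.sum_congr rfl
      intro i hi
      rw [Finset.mem_range] at hi
      rw [FillC_eq_sum d s m n hd hs i hi, Finset.mul_sum]
    have rhs_eq : ∑ i ∈ Finset.range m, p i / d i * ∑ j ∈ BSet d s n i, s j
        = ∑ j ∈ Finset.range n, ∑ i ∈ Finset.range m,
            (if j ∈ BSet d s n i then p i / d i * s j else 0) := by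
      rw [Finset.sum_comm]
      apply Finset.sum_congr rfl
      intro i hi
      rw [Finset.mul_sum]
      rw [Finset.sum_ite_mem]
      have hsub : BSet d s n i ⊆ Finset.range n := Finset.filter_subset _ _
      rw [Finset.inter_eq_right.mpr hsub]
    rw [lhs_eq, rhs_eq]
    apply Finset.sum_le_sum
    intro j hj
    exact charge_per_item d p s m n hd hp hs heff j (Finset.mem_range.mp hj)
  refine le_trans step3 ?_
  unfold Psi fSum
  apply Finset.sum_le_sum
  intro i hi
  rw [Finset.mem_range] at hi
  dsimp only
  simp only [if_pos hi]
  set f0 := ∑ j ∈ BSet d s n i, s j with hf0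
  have hub : f0 ≤ 2 * d i := by
    have h1 := BSet_sum_le d s m n hd hs i hi
    have h2 := FillC_le d s m n hd hs i hi
    linarith
  by_cases hc : d i ≤ f0
  · have hmin : min (f0 / d i) 1 = 1 := by
      apply min_eq_right
      rw [le_div_iff₀ (hd i hi)]
      linarith
    rw [hmin, if_pos hc]
    have hppos := hp i hi
    have hdpos := hd i hi
    rw [div_mul_eq_mul_div, div_le_iff₀ hdpos]
    nlinarith
  · have hflt : f0 < d i := lt_of_not_ge hc
    have hmin : min (f0 / d i) 1 = f0 / d i := by
      apply min_eq_left
      rw [div_le_one (hd i hi)]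
      exact le_of_lt hflt
    rw [hmin, if_neg hc]
    have : p i / d i * f0 = p i * (f0 / d i + 0) := by ring
    rw [this]

end Charge


section Repair

variable (d p s : ℕ → ℝ) (m n : ℕ)

/-- Move item `t` from bin `a` to bin `b`. -/
noncomputable def moveS (S : ℕ → Finset ℕ) (a b t : ℕ) : ℕ → Finset ℕ :=
  fun i => if i = b then insert t (S b) else if i = a then (S a).erase t else S i

noncomputable def muCov (S : ℕ → Finset ℕ) : ℝ :=
  ∑ i ∈ Finset.range m, (if d i ≤ fSum s S i then (1:ℝ) else 0)

noncomputable def mu2 (S : ℕ → Finset ℕ) : ℝ :=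
  ∑ i ∈ Finset.range m, p i / d i * fSum s S i

noncomputable def mu3 (S : ℕ → Finset ℕ) : ℝ :=
  ∑ i ∈ Finset.range m, d i * fSum s S i

noncomputable def mu4 (S : ℕ → Finset ℕ) : ℝ :=
  ∑ i ∈ Finset.range m, (fSum s S i)^2

lemma sum_diff_two (A : Finset ℕ) (a b : ℕ) (ha : a ∈ A) (hb : b ∈ A) (hab : a ≠ b)
    (g g' : ℕ → ℝ) (hgg : ∀ i ∈ A, i ≠ a → i ≠ b → g' i = g i) :
    ∑ i ∈ A, g' i = ∑ i ∈ A, g i + (g' a - g a) + (g' b - g b) := by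
  have hpair : ({a, b} : Finset ℕ) ⊆ A := by
    intro x hx
    simp only [Finset.mem_insert, Finset.mem_singleton] at hx
    rcases hx with rfl | rfl <;> assumption
  have h1 : ∑ i ∈ A, (g' i - g i) = ∑ i ∈ ({a,b} : Finset ℕ), (g' i - g i) := by
    symm
    apply Finset.sum_subset hpair
    intro x hx hnx
    simp only [Finset.mem_insert, Finset.mem_singleton] at hnx
    push_neg at hnx
    rw [hgg x hx hnx.1 hnx.2]
    ring
  have h2 : ∑ i ∈ ({a,b} : Finset ℕ), (g' i - g i) = (g' a - g a) + (g' b - g b) :=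
    Finset.sum_pair hab
  have h3 : ∑ i ∈ A, (g' i - g i) = ∑ i ∈ A, g' i - ∑ i ∈ A, g i :=
    by rw [Finset.sum_sub_distrib]
  linarith

variable (hd : ∀ i < m, 0 < d i) (hp : ∀ i < m, 0 < p i) (hs : ∀ j < n, 0 < s j)

include hd hp hs in
lemma move_core (S : ℕ → Finset ℕ) (hS : IsPartSolution m d s id (Finset.range n) S)
    (a b t : ℕ) (ham : a < m) (hbm : b < m) (hab : a ≠ b) (ht : t ∈ S a)
    (htb : s t ≤ d b) (hfa : fSum s S a < d a) (hfb : fSum s S b < d b)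
    (he : p a / d a ≤ p b / d b) :
    IsPartSolution m d s id (Finset.range n) (moveS S a b t) ∧
    Psi d p s m S ≤ Psi d p s m (moveS S a b t) ∧
    muCov d s m (moveS S a b t)
      = muCov d s m S + (if d b ≤ fSum s S b + s t then 1 else 0) ∧
    mu2 d p s m (moveS S a b t) = mu2 d p s m S + s t * (p b / d b - p a / d a) ∧
    mu3 d s m (moveS S a b t) = mu3 d s m S + s t * (d b - d a) ∧
    mu4 s m (moveS S a b t)
      = mu4 s m S + (2 * s t * (fSum s S b - fSum s S a) + s t ^ 2 + s t ^ 2) := by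
  obtain ⟨hsub, hdisj, hadm, hemp⟩ := hS
  have htn : t ∈ Finset.range n := hsub a ht
  have htnlt : t < n := Finset.mem_range.mp htn
  have hst : 0 < s t := hs t htnlt
  have htb' : t ∉ S b := Finset.disjoint_left.mp (hdisj hab) ht
  set S' := moveS S a b t with hS'def
  have hS'a : S' a = (S a).erase t := by
    rw [hS'def]
    simp [moveS, hab]
  have hS'b : S' b = insert t (S b) := by
    rw [hS'def]
    simp [moveS]
  have hS'other : ∀ i, i ≠ a → i ≠ b → S' i = S i := by
    intro i hia hib
    rw [hS'def]
    simp [moveS, hia, hib]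
  have hfa' : fSum s S' a = fSum s S a - s t := by
    unfold fSum
    rw [hS'a]
    exact Finset.sum_erase_eq_sub ht
  have hfb' : fSum s S' b = fSum s S b + s t := by
    unfold fSum
    rw [hS'b, Finset.sum_insert htb']
    ring
  have hfother : ∀ i, i ≠ a → i ≠ b → fSum s S' i = fSum s S i := by
    intro i hia hib
    unfold fSum
    rw [hS'other i hia hib]
  have hdb := hd b hbm
  have hda := hd a ham
  have hpb := hp b hbm
  have hpa := hp a ham
  refine ⟨?_, ?_, ?_, ?_, ?_, ?_⟩
  · -- validity
    refine ⟨?_, ?_, ?_, ?_⟩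
    · intro i
      rcases eq_or_ne i b with rfl | hib
      · rw [hS'b]
        intro x hx
        rcases Finset.mem_insert.mp hx with rfl | hx'
        · exact htn
        · exact hsub _ hx'
      · rcases eq_or_ne i a with rfl | hia
        · rw [hS'a]
          exact fun x hx => hsub _ (Finset.erase_subset _ _ hx)
        · rw [hS'other i hia hib]
          exact hsub i
    · intro i i' hne
      rw [Finset.disjoint_left]
      intro x hxi hxi'
      have hmem : ∀ k, x ∈ S' k → x ∈ S k ∨ (k = b ∧ x = t) := by
        intro k hxk
        rcases eq_or_ne k b with rfl | hkb
        · rw [hS'b] at hxk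
          rcases Finset.mem_insert.mp hxk with rfl | h
          · exact Or.inr ⟨rfl, rfl⟩
          · exact Or.inl h
        · rcases eq_or_ne k a with rfl | hka
          · rw [hS'a] at hxk
            exact Or.inl (Finset.mem_of_mem_erase hxk)
          · rw [hS'other k hka hkb] at hxk
            exact Or.inl hxk
      have hnei : x ∈ S' a → x ≠ t := by
        intro hxa
        rw [hS'a] at hxa
        exact Finset.ne_of_mem_erase hxa
      have htk : ∀ k, k ≠ a → t ∉ S k := by
        intro k hka
        exact Finset.disjoint_left.mp (hdisj (fun h => hka h.symm)) ht
      rcases hmem i hxi with hxiS | ⟨hib, hxt⟩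
      · rcases hmem i' hxi' with hxi'S | ⟨hi'b, hxt⟩
        · exact Finset.disjoint_left.mp (hdisj hne) hxiS hxi'S
        · subst hxt
          rcases eq_or_ne i a with rfl | hia
          · exact hnei hxi rfl
          · exact htk i hia hxiS
      · subst hxt
        rcases hmem i' hxi' with hxi'S | ⟨hi'b, hxt'⟩
        · rcases eq_or_ne i' a with rfl | hia
          · exact hnei hxi' rfl
          · exact htk i' hia hxi'S
        · exact absurd (hib.trans hi'b.symm) hne
    · intro i him q hq
      rcases eq_or_ne i b with rfl | hib
      · rw [hS'b] at hq
        rcases Finset.mem_insert.mp hq with rfl | hq'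
        · exact htb
        · exact hadm _ him q hq'
      · rcases eq_or_ne i a with rfl | hia
        · rw [hS'a] at hq
          exact hadm _ him q (Finset.mem_of_mem_erase hq)
        · rw [hS'other i hia hib] at hq
          exact hadm i him q hq
    · intro i hmi
      have hia : i ≠ a := by omega
      have hib : i ≠ b := by omega
      rw [hS'other i hia hib]
      exact hemp i hmi
  · -- Psi
    have key := sum_diff_two (Finset.range m) a b (Finset.mem_range.mpr ham)
      (Finset.mem_range.mpr hbm) hab
      (fun i => p i * (min (fSum s S i / d i) 1 + if d i ≤ fSum s S i then 1 else 0))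
      (fun i => p i * (min (fSum s S' i / d i) 1 + if d i ≤ fSum s S' i then 1 else 0))
      (by
        intro i _ hia hib
        rw [hfother i hia hib])
    show Psi d p s m S ≤ Psi d p s m S'
    unfold Psi
    rw [key]
    have hga : p a * (min (fSum s S a / d a) 1 + if d a ≤ fSum s S a then 1 else 0)
        = p a * (fSum s S a / d a) := by
      rw [min_eq_left (by rw [div_le_one hda]; linarith), if_neg (by linarith)]
      ring
    have hga' : p a * (min (fSum s S' a / d a) 1 + if d a ≤ fSum s S' a then 1 else 0)
        = p a * ((fSum s S a - s t) / d a) := by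
      rw [hfa', min_eq_left (by rw [div_le_one hda]; linarith),
        if_neg (by push_neg; linarith)]
      ring
    have hgb : p b * (min (fSum s S b / d b) 1 + if d b ≤ fSum s S b then 1 else 0)
        = p b * (fSum s S b / d b) := by
      rw [min_eq_left (by rw [div_le_one hdb]; linarith), if_neg (by linarith)]
      ring
    have hda' : p a * ((fSum s S a - s t) / d a) - p a * (fSum s S a / d a)
        = -(p a / d a * s t) := by
      field_simp
      ring
    have h1 : p a / d a * s t ≤ p b / d b * s t :=
      mul_le_mul_of_nonneg_right he (le_of_lt hst)
    by_cases hov : d b ≤ fSum s S b + s t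
    · have hgb' : p b * (min (fSum s S' b / d b) 1 + if d b ≤ fSum s S' b then 1 else 0)
          = p b * 2 := by
        rw [hfb', min_eq_right (by rw [le_div_iff₀ hdb]; linarith), if_pos hov]
        ring
      rw [hga, hga', hgb, hgb']
      have h2 : p b / d b * s t ≤ p b := by
        rw [div_mul_eq_mul_div, div_le_iff₀ hdb]
        nlinarith
      have h3 : p b * (fSum s S b / d b) ≤ p b := by
        apply mul_le_of_le_one_right (le_of_lt hpb)
        rw [div_le_one hdb]
        linarith
      linarith
    · push_neg at hov
      have hgb' : p b * (min (fSum s S' b / d b) 1 + if d b ≤ fSum s S' b then 1 else 0)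
          = p b * ((fSum s S b + s t) / d b) := by
        rw [hfb', min_eq_left (by rw [div_le_one hdb]; linarith),
          if_neg (by push_neg; linarith)]
        ring
      rw [hga, hga', hgb, hgb']
      have hdb' : p b * ((fSum s S b + s t) / d b) - p b * (fSum s S b / d b)
          = p b / d b * s t := by
        field_simp
        ring
      linarith
  · -- muCov
    have key := sum_diff_two (Finset.range m) a b (Finset.mem_range.mpr ham)
      (Finset.mem_range.mpr hbm) hab
      (fun i => if d i ≤ fSum s S i then (1:ℝ) else 0)
      (fun i => if d i ≤ fSum s S' i then (1:ℝ) else 0)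
      (by
        intro i _ hia hib
        rw [hfother i hia hib])
    unfold muCov
    rw [key]
    have hga' : (if d a ≤ fSum s S' a then (1:ℝ) else 0) = 0 := by
      rw [hfa', if_neg (by push_neg; linarith)]
    have hga : (if d a ≤ fSum s S a then (1:ℝ) else 0) = 0 := by
      rw [if_neg (by linarith)]
    have hgb : (if d b ≤ fSum s S b then (1:ℝ) else 0) = 0 := by
      rw [if_neg (by linarith)]
    have hgb' : (if d b ≤ fSum s S' b then (1:ℝ) else 0)
        = (if d b ≤ fSum s S b + s t then (1:ℝ) else 0) := by
      rw [hfb']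
    rw [hga, hga', hgb, hgb']
    ring
  · -- mu2
    have key := sum_diff_two (Finset.range m) a b (Finset.mem_range.mpr ham)
      (Finset.mem_range.mpr hbm) hab
      (fun i => p i / d i * fSum s S i)
      (fun i => p i / d i * fSum s S' i)
      (by
        intro i _ hia hib
        rw [hfother i hia hib])
    unfold mu2
    rw [key]
    rw [hfa', hfb']
    ring
  · -- mu3
    have key := sum_diff_two (Finset.range m) a b (Finset.mem_range.mpr ham)
      (Finset.mem_range.mpr hbm) hab
      (fun i => d i * fSum s S i)
      (fun i => d i * fSum s S' i)
      (by
        intro i _ hia hib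
        rw [hfother i hia hib])
    unfold mu3
    rw [key]
    rw [hfa', hfb']
    ring
  · -- mu4
    have key := sum_diff_two (Finset.range m) a b (Finset.mem_range.mpr ham)
      (Finset.mem_range.mpr hbm) hab
      (fun i => (fSum s S i)^2)
      (fun i => (fSum s S' i)^2)
      (by
        intro i _ hia hib
        rw [hfother i hia hib])
    unfold mu4
    rw [key]
    rw [hfa', hfb']
    ring

end Repair


section Order

variable (d p s : ℕ → ℝ) (m n : ℕ)

def GtRel (S' S : ℕ → Finset ℕ) : Prop :=
  muCov d s m S < muCov d s m S' ∨
  (muCov d s m S' = muCov d s m S ∧ (mu2 d p s m S < mu2 d p s m S' ∨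
    (mu2 d p s m S' = mu2 d p s m S ∧ (mu3 d s m S < mu3 d s m S' ∨
      (mu3 d s m S' = mu3 d s m S ∧ mu4 s m S < mu4 s m S')))))

lemma GtRel_irrefl (S : ℕ → Finset ℕ) : ¬ GtRel d p s m S S := by
  rintro (h | ⟨_, h | ⟨_, h | ⟨_, h⟩⟩⟩) <;> exact lt_irrefl _ h

lemma GtRel_trans (S'' S' S : ℕ → Finset ℕ) (h1 : GtRel d p s m S'' S')
    (h2 : GtRel d p s m S' S) : GtRel d p s m S'' S := by
  unfold GtRel at *
  rcases h1 with h1 | ⟨e1, h1⟩ <;> rcases h2 with h2 | ⟨e2, h2⟩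
  · exact Or.inl (lt_trans h2 h1)
  · exact Or.inl (e2 ▸ h1)
  · exact Or.inl (by rw [e1]; exact h2)
  · refine Or.inr ⟨by rw [e1, e2], ?_⟩
    rcases h1 with h1 | ⟨f1, h1⟩ <;> rcases h2 with h2 | ⟨f2, h2⟩
    · exact Or.inl (lt_trans h2 h1)
    · exact Or.inl (f2 ▸ h1)
    · exact Or.inl (by rw [f1]; exact h2)
    · refine Or.inr ⟨by rw [f1, f2], ?_⟩
      rcases h1 with h1 | ⟨g1, h1⟩ <;> rcases h2 with h2 | ⟨g2, h2⟩
      · exact Or.inl (lt_trans h2 h1)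
      · exact Or.inl (g2 ▸ h1)
      · exact Or.inl (by rw [g1]; exact h2)
      · exact Or.inr ⟨by rw [g1, g2], lt_trans h2 h1⟩

variable (hd : ∀ i < m, 0 < d i) (hp : ∀ i < m, 0 < p i) (hs : ∀ j < n, 0 < s j)

include hd hp hs in
lemma move_exists (S : ℕ → Finset ℕ) (hS : IsPartSolution m d s id (Finset.range n) S)
    (hnm : ¬ MaximalMod m d p s S) :
    ∃ S', IsPartSolution m d s id (Finset.range n) S' ∧
      Psi d p s m S ≤ Psi d p s m S' ∧ GtRel d p s m S' S := by
  unfold MaximalMod at hnm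
  rw [not_not] at hnm
  obtain ⟨i, i', him, hi'm, hne, hp1, hl1, hp2, hl2, heq, j, hjmem, hjadm⟩ := hnm
  have hfi1 : fSum s S i < d i := hl1
  have hfi2 : fSum s S i' < d i' := hl2
  have hjn : j < n := Finset.mem_range.mp (hS.1 i hjmem)
  have hsj : 0 < s j := hs j hjn
  obtain ⟨hval, hpsi, hcov, h2, h3, h4⟩ :=
    move_core d p s m n hd hp hs S hS i i' j him hi'm hne hjmem hjadm hfi1 hfi2 heq
  by_cases hov : d i' ≤ fSum s S i' + s j
  · refine ⟨moveS S i i' j, hval, hpsi, Or.inl ?_⟩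
    rw [hcov, if_pos hov]
    linarith
  · by_cases hestrict : p i / d i < p i' / d i'
    · refine ⟨moveS S i i' j, hval, hpsi, Or.inr ⟨by rw [hcov, if_neg hov]; ring, Or.inl ?_⟩⟩
      rw [h2]
      nlinarith
    · have heqe : p i' / d i' = p i / d i := le_antisymm (le_of_not_gt hestrict) heq
      by_cases hdlt : d i < d i'
      · refine ⟨moveS S i i' j, hval, hpsi,
          Or.inr ⟨by rw [hcov, if_neg hov]; ring,
          Or.inr ⟨by rw [h2, heqe]; ring, Or.inl ?_⟩⟩⟩
        rw [h3]
        nlinarith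
      · -- need a reverse-move candidate
        have hne' : (S i').Nonempty := by
          rw [Finset.nonempty_iff_ne_empty]
          intro hemp
          have hzero : (∑ j ∈ S i', s j) = 0 := by rw [hemp]; exact Finset.sum_empty
          linarith
        obtain ⟨k, hk⟩ := hne'
        have hkadm : s k ≤ d i' := hS.2.2.1 i' hi'm k hk
        have hkadm' : s k ≤ d i := le_trans hkadm (le_of_not_gt hdlt)
        have hkn : k < n := Finset.mem_range.mp (hS.1 i' hk)
        have hsk : 0 < s k := hs k hkn
        obtain ⟨hval', hpsi', hcov', h2', h3', h4'⟩ :=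
          move_core d p s m n hd hp hs S hS i' i k hi'm him (Ne.symm hne)
            hk hkadm' hfi2 hfi1 (le_of_eq heqe)
        by_cases hdlt' : d i' < d i
        · by_cases hov' : d i ≤ fSum s S i + s k
          · refine ⟨moveS S i' i k, hval', hpsi', Or.inl ?_⟩
            rw [hcov', if_pos hov']
            linarith
          · refine ⟨moveS S i' i k, hval', hpsi',
              Or.inr ⟨by rw [hcov', if_neg hov']; ring,
              Or.inr ⟨by rw [h2', heqe]; ring, Or.inl ?_⟩⟩⟩
            rw [h3']
            nlinarith
        · have hdeq : d i = d i' := le_antisymm (le_of_not_gt hdlt') (le_of_not_gt hdlt)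
          by_cases hff : fSum s S i ≤ fSum s S i'
          · refine ⟨moveS S i i' j, hval, hpsi,
              Or.inr ⟨by rw [hcov, if_neg hov]; ring,
              Or.inr ⟨by rw [h2, heqe]; ring,
              Or.inr ⟨by rw [h3, hdeq]; ring, ?_⟩⟩⟩⟩
            have hd1 : 0 ≤ 2 * s j * (fSum s S i' - fSum s S i) :=
              mul_nonneg (by linarith) (by linarith)
            have hd2 : 0 < s j ^ 2 := pow_pos hsj 2
            rw [h4]
            linarith
          · push_neg at hff
            by_cases hov' : d i ≤ fSum s S i + s k
            · refine ⟨moveS S i' i k, hval', hpsi', Or.inl ?_⟩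
              rw [hcov', if_pos hov']
              linarith
            · refine ⟨moveS S i' i k, hval', hpsi',
                Or.inr ⟨by rw [hcov', if_neg hov']; ring,
                Or.inr ⟨by rw [h2', heqe]; ring,
                Or.inr ⟨by rw [h3', hdeq]; ring, ?_⟩⟩⟩⟩
              have hd1 : 0 ≤ 2 * s k * (fSum s S i - fSum s S i') :=
                mul_nonneg (by linarith) (by linarith)
              have hd2 : 0 < s k ^ 2 := pow_pos hsk 2
              rw [h4']
              linarith

end Order


section Finiteness

variable (d p s : ℕ → ℝ) (m n : ℕ)

def SolSet : Set (ℕ → Finset ℕ) :=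
  {S | (∀ i, S i ⊆ Finset.range n) ∧ ∀ i, m ≤ i → S i = ∅}

lemma solSet_finite : (SolSet m n).Finite := by
  have hsub : SolSet m n ⊆ Set.range
      (fun (f : Fin m → Finset (Fin n)) => fun i =>
        if h : i < m then ((f ⟨i, h⟩).image Fin.val) else ∅) := by
    intro S hS
    refine ⟨fun i => (S i.1).attachFin (fun x hx => Finset.mem_range.mp (hS.1 i.1 hx)), ?_⟩
    funext i
    dsimp only
    by_cases him : i < m
    · rw [dif_pos him]
      ext x
      constructor
      · intro hx
        obtain ⟨a, ha, rfl⟩ := Finset.mem_image.mp hx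
        exact (Finset.mem_attachFin _).mp ha
      · intro hx
        exact Finset.mem_image.mpr
          ⟨⟨x, Finset.mem_range.mp (hS.1 i hx)⟩, (Finset.mem_attachFin _).mpr hx, rfl⟩
    · rw [dif_neg him]
      exact (hS.2 i (le_of_not_gt him)).symm
  exact (Set.finite_range _).subset hsub

variable (hd : ∀ i < m, 0 < d i) (hp : ∀ i < m, 0 < p i) (hs : ∀ j < n, 0 < s j)

include hd hp hs in
lemma repair (k : ℕ) : ∀ S, IsPartSolution m d s id (Finset.range n) S →
    ({S' ∈ SolSet m n | GtRel d p s m S' S}).ncard ≤ k →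
    ∃ S', IsPartSolution m d s id (Finset.range n) S' ∧ MaximalMod m d p s S' ∧
      Psi d p s m S ≤ Psi d p s m S' := by
  induction k with
  | zero =>
    intro S hS hcard
    by_cases hmax : MaximalMod m d p s S
    · exact ⟨S, hS, hmax, le_refl _⟩
    · exfalso
      obtain ⟨S'', hS'', hpsi, hgt⟩ := move_exists d p s m n hd hp hs S hS hmax
      have hmem : S'' ∈ {S' ∈ SolSet m n | GtRel d p s m S' S} :=
        ⟨⟨hS''.1, hS''.2.2.2⟩, hgt⟩
      have hfin : ({S' ∈ SolSet m n | GtRel d p s m S' S}).Finite :=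
        (solSet_finite m n).subset (Set.sep_subset _ _)
      have hpos : 0 < ({S' ∈ SolSet m n | GtRel d p s m S' S}).ncard := by
        rw [Set.ncard_pos hfin]
        exact ⟨S'', hmem⟩
      omega
  | succ k ih =>
    intro S hS hcard
    by_cases hmax : MaximalMod m d p s S
    · exact ⟨S, hS, hmax, le_refl _⟩
    · obtain ⟨S'', hS'', hpsi, hgt⟩ := move_exists d p s m n hd hp hs S hS hmax
      have hfin : ({S' ∈ SolSet m n | GtRel d p s m S' S}).Finite :=
        (solSet_finite m n).subset (Set.sep_subset _ _)
      have hss : {S' ∈ SolSet m n | GtRel d p s m S' S''}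
          ⊂ {S' ∈ SolSet m n | GtRel d p s m S' S} := by
        constructor
        · rintro X ⟨hX, hgX⟩
          exact ⟨hX, GtRel_trans d p s m X S'' S hgX hgt⟩
        · intro hcon
          have hmem : S'' ∈ {S' ∈ SolSet m n | GtRel d p s m S' S} :=
            ⟨⟨hS''.1, hS''.2.2.2⟩, hgt⟩
          have := hcon hmem
          exact GtRel_irrefl d p s m S'' this.2
      have hlt : ({S' ∈ SolSet m n | GtRel d p s m S' S''}).ncard
          < ({S' ∈ SolSet m n | GtRel d p s m S' S}).ncard :=
        Set.ncard_lt_ncard hss hfin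
      obtain ⟨S', h1, h2, h3⟩ := ih S'' hS'' (by omega)
      exact ⟨S', h1, h2, le_trans hpsi h3⟩

include hd hp hs in
lemma Psi_le_two (S : ℕ → Finset ℕ) (hS : IsPartSolution m d s id (Finset.range n) S) :
    Psi d p s m S ≤ 2 * pStarParts m d p s S := by
  unfold Psi pStarParts
  rw [Finset.mul_sum]
  apply Finset.sum_le_sum
  intro i hi
  rw [Finset.mem_range] at hi
  have hdi := hd i hi
  have hpi := hp i hi
  have hf0 : 0 ≤ fSum s S i := by
    apply Finset.sum_nonneg
    intro q hq
    exact le_of_lt (hs q (Finset.mem_range.mp (hS.1 i hq)))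
  have hpst : (∑ q ∈ S i, s q) = fSum s S i := rfl
  rw [hpst]
  by_cases hc : d i ≤ fSum s S i
  · rw [if_pos hc, min_eq_right (by rw [le_div_iff₀ hdi]; linarith)]
    ring_nf
    linarith
  · rw [if_neg hc]
    have hmn : 0 ≤ min (fSum s S i / d i) 1 :=
      le_min (div_nonneg hf0 (le_of_lt hdi)) zero_le_one
    nlinarith

end Finiteness

/- STATEMENT 4 -/
theorem stmt4 (m n : ℕ) (d p s : ℕ → ℝ)
    (hd : ∀ i < m, 0 < d i) (hp : ∀ i < m, 0 < p i) (hs : ∀ j < n, 0 < s j)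
    (heff : ∀ i i', i ≤ i' → i' < m → p i' / d i' ≤ p i / d i)
    (hss : ∀ j j', j ≤ j' → j' < n → s j' ≤ s j) :
    ∃ Sstar : ℕ → Finset ℕ, IsPartSolution m d s id (Finset.range n) Sstar ∧
      MaximalMod m d p s Sstar ∧
      algStarPStar m n d p s ≤ 2 * pStarParts m d p s Sstar := by
  classical
  set S0 : ℕ → Finset ℕ := fun i => if i < m then BSet d s n i else ∅ with hS0def
  have hS0 : IsPartSolution m d s id (Finset.range n) S0 := by
    refine ⟨?_, ?_, ?_, ?_⟩
    · intro i
      rw [hS0def]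
      dsimp only
      split
      · exact Finset.filter_subset _ _
      · exact Finset.empty_subset _
    · intro i i' hne
      rw [Finset.disjoint_left]
      intro x hxi hxi'
      rw [hS0def] at hxi hxi'
      dsimp only at hxi hxi'
      by_cases him : i < m
      · by_cases him' : i' < m
        · rw [if_pos him] at hxi
          rw [if_pos him'] at hxi'
          exact (BSet_disjoint d s m n hd hs i i' hne him him' x hxi) hxi'
        · rw [if_neg him'] at hxi'
          exact absurd hxi' (Finset.notMem_empty x)
      · rw [if_neg him] at hxi
        exact absurd hxi (Finset.notMem_empty x)
    · intro i him q hq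
      rw [hS0def] at hq
      dsimp only at hq
      rw [if_pos him] at hq
      exact (BSet_admissible d s m n hd hs i him q hq).2
    · intro i him
      rw [hS0def]
      dsimp only
      rw [if_neg (by omega)]
  have halg : algStarPStar m n d p s ≤ Psi d p s m S0 := by
    rw [hS0def]
    exact alg_le_Psi d p s m n hd hp hs heff
  obtain ⟨Sstar, h1, h2, h3⟩ := repair d p s m n hd hp hs
    (({S' ∈ SolSet m n | GtRel d p s m S' S0}).ncard) S0 hS0 (le_refl _)
  refine ⟨Sstar, h1, h2, ?_⟩
  have h4 := Psi_le_two d p s m n hd hp hs Sstar h1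
  calc algStarPStar m n d p s ≤ Psi d p s m S0 := halg
    _ ≤ Psi d p s m Sstar := h3
    _ ≤ 2 * pStarParts m d p s Sstar := h4

end BinCov
end
end

section
/- Consider NFD's solution to an instance (I,J) of Variable-Sized Bin Covering with unit supply, assume NFD covers bin 1, and let i* be a bin with u(i*) = 0 such that u(i) > 0 for every bin i > i*. Let I' = I ∖ {i*+1,…,m}. Then OPT(I,J)·NFD(I',J) ≤ OPT(I',J)·NFD(I,J), i.e., OPT(I,J)/NFD(I,J) ≤ OPT(I',J)/NFD(I',J). -/
open scoped Classical

noncomputable section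

namespace BinCov


lemma takeFill_append (s : ℕ → ℝ) : ∀ (dem : ℝ) (L : List ℕ),
    (takeFill s dem L).1 ++ (takeFill s dem L).2 = L
  | _, [] => rfl
  | dem, j :: rest => by
    simp only [takeFill]
    split
    · rfl
    · simpa using takeFill_append s (dem - s j) rest

lemma takeFill_sum (s : ℕ → ℝ) : ∀ (dem : ℝ) (L : List ℕ),
    dem ≤ (L.map s).sum → dem ≤ ((takeFill s dem L).1.map s).sum
  | dem, [], h => by simpa [takeFill] using h
  | dem, j :: rest, h => by
    simp only [takeFill]
    split
    · simpa
    · have := takeFill_sum s (dem - s j) rest (by simp at h; linarith)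
      simp only [List.map_cons, List.sum_cons]
      linarith

lemma nfdAux_subset (d s : ℕ → ℝ) : ∀ (bins items : List ℕ) (b : ℕ),
    nfdAux d s bins items b ⊆ items.toFinset
  | [], items, b => by simp [nfdAux]
  | i :: t, items, b => by
    simp only [nfdAux]
    have happ := takeFill_append s (d i) items
    split
    · split
      · intro x hx
        simp only [List.mem_toFinset] at hx ⊢
        rw [← happ]; exact List.mem_append_left _ hx
      · refine (nfdAux_subset d s t _ b).trans ?_
        intro x hx
        simp only [List.mem_toFinset] at hx ⊢
        rw [← happ]; exact List.mem_append_right _ hx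
    · split
      · simp
      · exact nfdAux_subset d s t items b

lemma nfdAux_disjoint (d s : ℕ → ℝ) : ∀ (bins items : List ℕ), items.Nodup →
    ∀ b b', b ≠ b' → Disjoint (nfdAux d s bins items b) (nfdAux d s bins items b')
  | [], items, hnd, b, b', hbb => by simp [nfdAux]
  | i :: t, items, hnd, b, b', hbb => by
    have happ := takeFill_append s (d i) items
    have hnd2 : ((takeFill s (d i) items).1 ++ (takeFill s (d i) items).2).Nodup := by
      rw [happ]; exact hnd
    rw [List.nodup_append] at hnd2
    obtain ⟨h1, h2, hdisj⟩ := hnd2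
    have hdF : Disjoint (takeFill s (d i) items).1.toFinset (takeFill s (d i) items).2.toFinset := by
      rw [Finset.disjoint_left]
      intro a ha ha'
      simp only [List.mem_toFinset] at ha ha'
      exact hdisj a ha a ha' rfl
    simp only [nfdAux]
    split
    · by_cases hb : b = i
      · simp only [if_pos hb]
        rw [if_neg (by omega : ¬ b' = i)]
        exact hdF.mono_right (nfdAux_subset d s t _ b')
      · rw [if_neg hb]
        by_cases hb' : b' = i
        · rw [if_pos hb']
          exact (hdF.mono_right (nfdAux_subset d s t _ b)).symm
        · rw [if_neg hb']
          exact nfdAux_disjoint d s t _ h2 b b' hbb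
    · by_cases hb : b = i
      · simp [if_pos hb, if_neg (by omega : ¬ b' = i)]
      · rw [if_neg hb]
        by_cases hb' : b' = i
        · simp [if_pos hb']
        · rw [if_neg hb']
          exact nfdAux_disjoint d s t items hnd b b' hbb

lemma nfdAux_covered (d s : ℕ → ℝ) : ∀ (bins items : List ℕ), items.Nodup →
    ∀ b, 0 < ∑ j ∈ nfdAux d s bins items b, s j → d b ≤ ∑ j ∈ nfdAux d s bins items b, s j
  | [], items, hnd, b => by simp [nfdAux]
  | i :: t, items, hnd, b => by
    have happ := takeFill_append s (d i) items
    have hnd2 : ((takeFill s (d i) items).1 ++ (takeFill s (d i) items).2).Nodup := by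
      rw [happ]; exact hnd
    rw [List.nodup_append] at hnd2
    obtain ⟨h1, h2, hdisj⟩ := hnd2
    simp only [nfdAux]
    split
    · rename_i hcov
      by_cases hb : b = i
      · rw [if_pos hb]
        intro _
        rw [List.sum_toFinset _ h1]
        subst hb
        exact takeFill_sum s (d b) items hcov
      · rw [if_neg hb]
        exact nfdAux_covered d s t _ h2 b
    · by_cases hb : b = i
      · simp [if_pos hb]
      · rw [if_neg hb]
        exact nfdAux_covered d s t items hnd b

lemma nfdAux_prefix (d s : ℕ → ℝ) : ∀ (l1 l2 items : List ℕ) (b : ℕ), b ∈ l1 →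
    nfdAux d s (l1 ++ l2) items b = nfdAux d s l1 items b
  | [], l2, items, b, hb => by simp at hb
  | i :: t, l2, items, b, hb => by
    simp only [List.cons_append, nfdAux]
    by_cases hbi : b = i
    · simp [if_pos hbi]
    · have hbt : b ∈ t := by
        rcases List.mem_cons.mp hb with h | h
        · exact absurd h hbi
        · exact h
      split
      · exact nfdAux_prefix d s t l2 _ b hbt
      · exact nfdAux_prefix d s t l2 items b hbt

/- STATEMENT 9 -/
theorem stmt9 (m n : ℕ) (d s : ℕ → ℝ)
    (hd : ∀ i < m, 0 < d i) (hdm : ∀ i i', i ≤ i' → i' < m → d i' ≤ d i)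
    (hs : ∀ j < n, 0 < s j) (hsm : ∀ j j', j ≤ j' → j' < n → s j' ≤ s j)
    (hcov : d 0 ≤ nfdU d s (Finset.range m) (Finset.range n) 0)
    (istar : ℕ) (histar : istar < m)
    (hzero : nfdU d s (Finset.range m) (Finset.range n) istar = 0)
    (hafter : ∀ i, istar < i → i < m → 0 < nfdU d s (Finset.range m) (Finset.range n) i) :
    OPT d d s (Finset.range m) (Finset.range n) *
        NFD d s (Finset.range (istar + 1)) (Finset.range n) ≤
      OPT d d s (Finset.range (istar + 1)) (Finset.range n) *
        NFD d s (Finset.range m) (Finset.range n) := by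

  have hm1 : istar + 1 ≤ m := histar
  have hndT : (Finset.sort (Finset.range n) (· ≤ ·)).Nodup := Finset.sort_nodup _ _
  -- prefix agreement for bins ≤ istar
  have hprefix : ∀ b ≤ istar,
      nfdSol d s (Finset.range m) (Finset.range n) b
        = nfdSol d s (Finset.range (istar + 1)) (Finset.range n) b := by
    intro b hb
    unfold nfdSol
    simp only [Finset.sort_range]
    have hsplit : List.range m
        = List.range (istar + 1) ++ (List.range (m - (istar + 1))).map (fun x => (istar + 1) + x) := by
      rw [← List.range_add]; congr 1; omega
    rw [hsplit]
    exact nfdAux_prefix d s (List.range (istar + 1)) _ _ b (List.mem_range.mpr (by omega))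
  -- NFD's solution on the prefix instance is a feasible solution
  have hsolB' : IsSolution (Finset.range n)
      (nfdSol d s (Finset.range (istar + 1)) (Finset.range n)) := by
    constructor
    · intro i
      refine (nfdAux_subset d s _ _ i).trans ?_
      rw [Finset.sort_toFinset]
    · intro b b' hbb
      exact nfdAux_disjoint d s _ _ hndT b b' hbb
  -- any bin with positive load is covered
  have hcovpos : ∀ b, 0 < nfdU d s (Finset.range m) (Finset.range n) b →
      d b ≤ ∑ j ∈ nfdSol d s (Finset.range m) (Finset.range n) b, s j := by
    intro b hb
    exact nfdAux_covered d s _ _ hndT b hb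
  -- profit sums are bounded above
  have hBdd : ∀ B : Finset ℕ, (∀ i ∈ B, 0 ≤ d i) →
      BddAbove (profit d d s B '' {S | IsSolution (Finset.range n) S}) := by
    intro B hB
    refine ⟨∑ i ∈ B, d i, ?_⟩
    rintro v ⟨S, -, rfl⟩
    apply Finset.sum_le_sum
    intro i hi
    split_ifs
    · exact le_rfl
    · exact hB i hi
  have hdpos' : ∀ i ∈ Finset.range (istar + 1), 0 ≤ d i := by
    intro i hi
    exact (hd i (lt_of_lt_of_le (Finset.mem_range.mp hi) hm1)).le
  -- NFD' ≤ OPT'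
  have hNFD'le : NFD d s (Finset.range (istar + 1)) (Finset.range n)
      ≤ OPT d d s (Finset.range (istar + 1)) (Finset.range n) :=
    le_csSup (hBdd _ hdpos') ⟨_, hsolB', rfl⟩
  -- NFD' ≥ 0
  have hNFD'0 : 0 ≤ NFD d s (Finset.range (istar + 1)) (Finset.range n) := by
    unfold NFD profit
    apply Finset.sum_nonneg
    intro i hi
    split_ifs
    · exact hdpos' i hi
    · exact le_rfl
  have hOPT'0 : 0 ≤ OPT d d s (Finset.range (istar + 1)) (Finset.range n) :=
    le_trans hNFD'0 hNFD'le
  have hE0 : (0:ℝ) ≤ ∑ i ∈ Finset.Ico (istar + 1) m, d i :=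
    Finset.sum_nonneg fun i hi => (hd i (Finset.mem_Ico.mp hi).2).le
  -- NFD splits
  have hNFDsplit : NFD d s (Finset.range m) (Finset.range n)
      = NFD d s (Finset.range (istar + 1)) (Finset.range n)
        + ∑ i ∈ Finset.Ico (istar + 1) m, d i := by
    unfold NFD profit
    rw [← Finset.sum_range_add_sum_Ico _ hm1]
    congr 1
    · apply Finset.sum_congr rfl
      intro i hi
      rw [hprefix i (Nat.lt_succ_iff.mp (Finset.mem_range.mp hi))]
    · apply Finset.sum_congr rfl
      intro i hi
      rw [if_pos]
      exact hcovpos i (hafter i (Finset.mem_Ico.mp hi).1 (Finset.mem_Ico.mp hi).2)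
  -- OPT(I) ≤ OPT(I') + E
  have hOPTle : OPT d d s (Finset.range m) (Finset.range n)
      ≤ OPT d d s (Finset.range (istar + 1)) (Finset.range n)
        + ∑ i ∈ Finset.Ico (istar + 1) m, d i := by
    apply Real.sSup_le
    · rintro v ⟨S, hS, rfl⟩
      unfold profit
      rw [← Finset.sum_range_add_sum_Ico _ hm1]
      apply add_le_add
      · exact le_csSup (hBdd _ hdpos') ⟨S, hS, rfl⟩
      · apply Finset.sum_le_sum
        intro i hi
        split_ifs
        · exact le_rfl
        · exact (hd i (Finset.mem_Ico.mp hi).2).le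
    · linarith
  nlinarith [mul_le_mul_of_nonneg_right hOPTle hNFD'0,
    mul_le_mul_of_nonneg_left hNFD'le hE0, hNFDsplit]


end BinCov
end
end
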